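/- arXiv:1011.4685 — 3 statements merged into one kernel-verified Lean document; each statement's English description precedes it below -/
import Mathlib

section
/- Let 𝒞 be an abelian category with Ext-groups, and fix short exact sequences 0 → A →(j) M₁ →(π) N → 0 and 0 → N →(ι) M₂ →(ϖ) B → 0 in 𝒞, with extension classes e₁ ∈ Ext¹(N,A) and e₂ ∈ Ext¹(B,N) respectively. Then the Yoneda product of e₁ and e₂ vanishes in Ext²(B,A) if and only if there exists a blended extension of M₂ by M₁, i.e. an object M together with morphisms ι̃ : M₁ → M and π̃ : M → M₂ such that π̃ ∘ ι̃ = ι ∘ π and the sequences 0 → M₁ →(ι̃) M →(ϖ∘π̃) B → 0 and 0 → A →(ι̃∘j) M →(π̃) M₂ → 0 are short exact. -/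
open CategoryTheory CategoryTheory.Abelian

universe w v u

/-!
Write Yoneda products in diagrammatic order and let `e₁, e₂` be the two given classes.
If a blended extension exists, with classes `e₃ ∈ Ext¹(B, M₁)` and `e₄ ∈ Ext¹(M₂, A)`,
naturality of extension classes gives `e₂ = e₃ π` and `e₁ = ι e₄`, hence
`e₂ e₁ = e₃ (π ι) e₄ = e₃ ι' (π' e₄) = 0`.

Conversely, if `e₂ e₁ = 0`, the long exact Ext-sequence of the first sequence gives
`g ∈ Ext¹(B, M₁)` with `g π = e₂`. In the derived category `g` is the connecting morphism
of a distinguished triangle `M₁ → M → B → M₁[1]`; its middle term lies in the heart, so it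
is an object of `𝒞` and the triangle comes from a short exact sequence. The octahedral axiom
for `A → M₁ → M` gives a triangle `N → cone(A → M) → B` with connecting morphism `g π = e₂`,
which identifies `cone(A → M)` with `M₂`; the triangle `A → M → M₂` is then the second
short exact sequence.
-/

open CategoryTheory.Limits CategoryTheory.Pretriangulated

namespace CategoryTheory.Pretriangulated

variable {C : Type*} [Category C] [Preadditive C] [HasZeroObject C] [HasShift C ℤ]
  [∀ n : ℤ, (shiftFunctor C n).Additive] [Pretriangulated C]

lemma distinguished_of_iso_obj₂ {X Y Y' Z : C} {f : X ⟶ Y} {g : Y ⟶ Z}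
    {δ : Z ⟶ X⟦(1 : ℤ)⟧} (hT : Triangle.mk f g δ ∈ distTriang C) (e : Y ≅ Y') :
    Triangle.mk (f ≫ e.hom) (e.inv ≫ g) δ ∈ distTriang C :=
  isomorphic_distinguished _ hT _ (Triangle.isoMk _ _ (Iso.refl _) e.symm (Iso.refl _)
    (by simp [Triangle.mk]) (by simp [Triangle.mk]) (by simp [Triangle.mk]))

lemma distinguished_of_iso_obj₃ {X Y Z Z' : C} {f : X ⟶ Y} {g : Y ⟶ Z}
    {δ : Z ⟶ X⟦(1 : ℤ)⟧} (hT : Triangle.mk f g δ ∈ distTriang C) (e : Z ≅ Z') :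
    Triangle.mk f (g ≫ e.hom) (e.inv ≫ δ) ∈ distTriang C :=
  isomorphic_distinguished _ hT _ (Triangle.isoMk _ _ (Iso.refl _) (Iso.refl _) e.symm
    (by simp [Triangle.mk]) (by simp [Triangle.mk]) (by simp [Triangle.mk]))

lemma exists_iso_obj₂_of_distTriang {X Y Y' Z : C} {f : X ⟶ Y} {g : Y ⟶ Z} {f' : X ⟶ Y'}
    {g' : Y' ⟶ Z} {δ : Z ⟶ X⟦(1 : ℤ)⟧} (hT : Triangle.mk f g δ ∈ distTriang C)
    (hT' : Triangle.mk f' g' δ ∈ distTriang C) :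
    ∃ e : Y ≅ Y', f ≫ e.hom = f' ∧ e.hom ≫ g' = g := by
  obtain ⟨b, hb₁, hb₂⟩ := complete_distinguished_triangle_morphism₂ _ _ hT hT' (𝟙 X) (𝟙 Z)
    (by simp [Triangle.mk])
  let φ : Triangle.mk f g δ ⟶ Triangle.mk f' g' δ :=
    { hom₁ := 𝟙 X, hom₂ := b, hom₃ := 𝟙 Z, comm₁ := hb₁, comm₂ := hb₂,
      comm₃ := by simp [Triangle.mk] }
  -- `hb₁`, `hb₂` and `hb` are phrased through the projections of `Triangle.mk`, which only
  -- unfold at default transparency; hence term-mode steps rather than `simp` below.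
  have hb : IsIso φ.hom₂ := isIso₂_of_isIso₁₃ φ hT hT' (IsIso.id X) (IsIso.id Z)
  exact ⟨@asIso _ _ Y Y' b hb, hb₁.trans (Category.id_comp _),
    ((Category.comp_id _).symm.trans hb₂).symm⟩

end CategoryTheory.Pretriangulated

namespace DerivedCategory

variable {C : Type u} [Category.{v} C] [Abelian C] [HasDerivedCategory.{w} C]

section

variable {X Y Z : C} {f : X ⟶ Y} {g : Y ⟶ Z}
  {δ : (singleFunctor C 0).obj Z ⟶ ((singleFunctor C 0).obj X)⟦(1 : ℤ)⟧}

lemma comp_eq_zero_of_distTriang_singleFunctor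
    (hT : Triangle.mk ((singleFunctor C 0).map f) ((singleFunctor C 0).map g) δ ∈
      distTriang _) :
    f ≫ g = 0 :=
  (singleFunctor C 0).map_injective (by
    rw [Functor.map_comp, Functor.map_zero]
    exact comp_distTriang_mor_zero₁₂ _ hT)

lemma shortExact_of_distTriang_singleFunctor
    (hT : Triangle.mk ((singleFunctor C 0).map f) ((singleFunctor C 0).map g) δ ∈
      distTriang _) :
    (ShortComplex.mk f g (comp_eq_zero_of_distTriang_singleFunctor hT)).ShortExact := by
  have hf : Mono ((homologyFunctor C 0).map ((singleFunctor C 0).map f)) :=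
    (HomologySequence.mono_homologyMap_mor₁_iff _ hT (-1) 0).2
      ((((singleFunctor C 0).obj Z).isZero_of_isGE 0 (-1) (by lia)).eq_of_src _ _)
  have hg : Epi ((homologyFunctor C 0).map ((singleFunctor C 0).map g)) :=
    (HomologySequence.epi_homologyMap_mor₂_iff _ hT 0 1).2
      ((((singleFunctor C 0).obj X).isZero_of_isLE 0 1 (by lia)).eq_of_tgt _ _)
  have hS : ((ShortComplex.mk f g (comp_eq_zero_of_distTriang_singleFunctor hT)).map
      (singleFunctor C 0 ⋙ homologyFunctor C 0)).ShortExact :=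
    { exact := HomologySequence.exact₂ _ hT 0
      mono_f := hf
      epi_g := hg }
  exact ShortComplex.shortExact_of_iso
    (ShortComplex.mapNatIso _ (singleFunctorCompHomologyFunctorIso C 0)) hS

end

lemma exists_iso_singleFunctor_obj_of_distTriang {X Z : C} {Y : DerivedCategory C}
    {f : (singleFunctor C 0).obj X ⟶ Y} {g : Y ⟶ (singleFunctor C 0).obj Z}
    {δ : (singleFunctor C 0).obj Z ⟶ ((singleFunctor C 0).obj X)⟦(1 : ℤ)⟧}
    (hT : Triangle.mk f g δ ∈ distTriang _) :
    ∃ M : C, Nonempty (Y ≅ (singleFunctor C 0).obj M) := by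
  have : Y.IsGE 0 := TStructure.t.isGE₂ _ hT 0
    (inferInstanceAs (((singleFunctor C 0).obj X).IsGE 0))
    (inferInstanceAs (((singleFunctor C 0).obj Z).IsGE 0))
  have : Y.IsLE 0 := TStructure.t.isLE₂ _ hT 0
    (inferInstanceAs (((singleFunctor C 0).obj X).IsLE 0))
    (inferInstanceAs (((singleFunctor C 0).obj Z).IsLE 0))
  exact Y.exists_iso_singleFunctor_obj_of_isGE_of_isLE 0

lemma exists_distTriang_singleFunctor {X Z : C}
    (δ : (singleFunctor C 0).obj Z ⟶ ((singleFunctor C 0).obj X)⟦(1 : ℤ)⟧) :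
    ∃ (M : C) (f : X ⟶ M) (g : M ⟶ Z),
      Triangle.mk ((singleFunctor C 0).map f) ((singleFunctor C 0).map g) δ ∈
        distTriang _ := by
  obtain ⟨E, i, q, hT⟩ := distinguished_cocone_triangle₂ δ
  obtain ⟨M, ⟨e⟩⟩ := exists_iso_singleFunctor_obj_of_distTriang hT
  refine ⟨M, (singleFunctor C 0).preimage (i ≫ e.hom),
    (singleFunctor C 0).preimage (e.inv ≫ q), ?_⟩
  simpa only [Functor.map_preimage] using distinguished_of_iso_obj₂ hT e

end DerivedCategory

section BlendedExtension

open DerivedCategory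

variable {C : Type u} [Category.{v} C] [Abelian C] [HasExt.{w} C] {A B N M₁ M₂ : C}
  {j : A ⟶ M₁} {π : M₁ ⟶ N} {ι : N ⟶ M₂} {ϖ : M₂ ⟶ B}
  {w₁ : j ≫ π = 0} (h₁ : (ShortComplex.mk j π w₁).ShortExact)
  {w₂ : ι ≫ ϖ = 0} (h₂ : (ShortComplex.mk ι ϖ w₂).ShortExact)
include h₁ h₂

lemma extClass_comp_extClass_eq_zero_of_blended {M : C} {ι' : M₁ ⟶ M} {π' : M ⟶ M₂}
    (hcomm : ι' ≫ π' = π ≫ ι) {w₃ : ι' ≫ π' ≫ ϖ = 0} {w₄ : (j ≫ ι') ≫ π' = 0}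
    (h₃ : (ShortComplex.mk ι' (π' ≫ ϖ) w₃).ShortExact)
    (h₄ : (ShortComplex.mk (j ≫ ι') π' w₄).ShortExact) :
    (h₂.extClass.comp h₁.extClass (by norm_num) : Ext B A 2) = 0 := by
  have e₂_eq : h₂.extClass = h₃.extClass.comp (Ext.mk₀ π) (add_zero 1) := by
    simpa using (h₃.extClass_naturality h₂
      (ShortComplex.homMk π π' (𝟙 B) hcomm.symm (by simp))).symm
  have e₁_eq : h₁.extClass = (Ext.mk₀ ι).comp h₄.extClass (zero_add 1) := by
    simpa using h₁.extClass_naturality h₄ (ShortComplex.homMk (𝟙 A) ι' ι (by simp) hcomm)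
  rw [e₂_eq, e₁_eq, Ext.comp_assoc_of_second_deg_zero, Ext.mk₀_comp_mk₀_assoc, ← hcomm,
    ← Ext.mk₀_comp_mk₀_assoc, h₄.comp_extClass, Ext.comp_zero, Ext.comp_zero]

lemma exists_blended_of_extClass_comp_extClass_eq_zero
    (hvanish : (h₂.extClass.comp h₁.extClass (by norm_num) : Ext B A 2) = 0) :
    ∃ (M : C) (ι' : M₁ ⟶ M) (π' : M ⟶ M₂) (_ : ι' ≫ π' = π ≫ ι)
      (w₃ : ι' ≫ π' ≫ ϖ = 0) (w₄ : (j ≫ ι') ≫ π' = 0),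
      (ShortComplex.mk ι' (π' ≫ ϖ) w₃).ShortExact ∧
      (ShortComplex.mk (j ≫ ι') π' w₄).ShortExact := by
  let := HasDerivedCategory.standard C
  obtain ⟨e, he⟩ := Ext.covariant_sequence_exact₃ B h₁ h₂.extClass (by lia) hvanish
  have hδ : e.hom ≫ ((singleFunctor C 0).map π)⟦(1 : ℤ)⟧' = h₂.singleδ := by
    rw [← h₂.extClass_hom, ← he]
    exact Ext.hom_comp_singleFunctor_map_shift e π
  obtain ⟨M, ι', q, hT₃⟩ := exists_distTriang_singleFunctor e.hom
  obtain ⟨F, v, u, hF⟩ :=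
    distinguished_cocone_triangle ((singleFunctor C 0).map (j ≫ ι'))
  have hT₁ : Triangle.mk ((singleFunctor C 0).map j) ((singleFunctor C 0).map π)
      h₁.singleδ ∈ distTriang _ := h₁.singleTriangle_distinguished
  have hT₂ : Triangle.mk ((singleFunctor C 0).map ι) ((singleFunctor C 0).map ϖ)
      (e.hom ≫ ((singleFunctor C 0).map π)⟦(1 : ℤ)⟧') ∈ distTriang _ := by
    rw [hδ]
    exact h₂.singleTriangle_distinguished
  let O :=
    Triangulated.someOctahedron ((singleFunctor C 0).map_comp j ι').symm hT₁ hT₃ hF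
  obtain ⟨ψ, hψι, hψϖ⟩ := exists_iso_obj₂_of_distTriang O.mem hT₂
  obtain ⟨π', hπ'⟩ := (singleFunctor C 0).map_surjective (v ≫ ψ.hom)
  have hT₄ : Triangle.mk ((singleFunctor C 0).map (j ≫ ι')) ((singleFunctor C 0).map π')
      (ψ.inv ≫ u) ∈ distTriang _ := hπ' ▸ distinguished_of_iso_obj₃ hF ψ
  have hcomm : ι' ≫ π' = π ≫ ι := (singleFunctor C 0).map_injective (by
    rw [Functor.map_comp, Functor.map_comp, hπ', ← hψι, ← Category.assoc, ← O.comm₁,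
      Category.assoc])
  have hq : π' ≫ ϖ = q := (singleFunctor C 0).map_injective (by
    rw [Functor.map_comp, hπ', Category.assoc, hψϖ, O.comm₃])
  subst hq
  exact ⟨M, ι', π', hcomm, _, _, shortExact_of_distTriang_singleFunctor hT₃,
    shortExact_of_distTriang_singleFunctor hT₄⟩

end BlendedExtension

/-- **Criterion for the existence of blended extensions** (Grothendieck, SGA 7, 9.3.8.c).
Given short exact sequences `0 → A →(j) M₁ →(π) N → 0` and `0 → N →(ι) M₂ →(ϖ) B → 0`
in an abelian category `𝒞` (with Ext-groups), the Yoneda product of the class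
`e₁ ∈ Ext¹(N, A)` of the first sequence with the class `e₂ ∈ Ext¹(B, N)` of the second
vanishes in `Ext²(B, A)` if and only if there exists a blended extension of `M₂` by `M₁`. -/
theorem yoneda_product_eq_zero_iff_exists_blended_extension
    {𝒞 : Type u} [Category.{v} 𝒞] [Abelian 𝒞] [HasExt.{w} 𝒞]
    {A B N M₁ M₂ : 𝒞}
    (j : A ⟶ M₁) (π : M₁ ⟶ N) (ι : N ⟶ M₂) (ϖ : M₂ ⟶ B)
    (w₁ : j ≫ π = 0) (h₁ : (ShortComplex.mk j π w₁).ShortExact)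
    (w₂ : ι ≫ ϖ = 0) (h₂ : (ShortComplex.mk ι ϖ w₂).ShortExact) :
    (h₂.extClass.comp h₁.extClass (by norm_num) : Ext B A 2) = 0 ↔
      ∃ (M : 𝒞) (ι' : M₁ ⟶ M) (π' : M ⟶ M₂)
        (_ : ι' ≫ π' = π ≫ ι)
        (w₃ : ι' ≫ (π' ≫ ϖ) = 0) (w₄ : (j ≫ ι') ≫ π' = 0),
        (ShortComplex.mk ι' (π' ≫ ϖ) w₃).ShortExact ∧
        (ShortComplex.mk (j ≫ ι') π' w₄).ShortExact :=
  ⟨exists_blended_of_extClass_comp_extClass_eq_zero h₁ h₂,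
    fun ⟨_, _, _, hcomm, _, _, h₃, h₄⟩ =>
      extClass_comp_extClass_eq_zero_of_blended h₁ h₂ hcomm h₃ h₄⟩
end

section
/- For all a×a matrices z, z' and all h×a matrices ν, ν' over k, the commutator satisfies u(z,ν) · u(z',ν') · u(z,ν)⁻¹ · u(z',ν')⁻¹ = u(ν'^T·J·ν − ν^T·J·ν', 0). -/
open Matrix

variable {k : Type*} [Field k]

/-- The Gram matrix `Ψ = [[0, 0, ε·I_a], [0, J, 0], [I_a, 0, 0]]` of the
`ε`-symmetric form in the standard basis adapted to the totally isotropic subspace. -/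
def Psi (ε : k) (a h : ℕ) (J : Matrix (Fin h) (Fin h) k) :
    Matrix ((Fin a ⊕ Fin h) ⊕ Fin a) ((Fin a ⊕ Fin h) ⊕ Fin a) k :=
  Matrix.fromBlocks (Matrix.fromBlocks 0 0 0 J)
    (Matrix.fromRows (ε • (1 : Matrix (Fin a) (Fin a) k)) 0)
    (Matrix.fromCols (1 : Matrix (Fin a) (Fin a) k) 0) 0

/-- The unipotent block matrix
`u(z,ν) = [[I_a, -ν^T·J, z - (1/2)·ν^T·J·ν], [0, I_h, ν], [0, 0, I_a]]`. -/
def uMat (a h : ℕ) (J : Matrix (Fin h) (Fin h) k)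
    (z : Matrix (Fin a) (Fin a) k) (ν : Matrix (Fin h) (Fin a) k) :
    Matrix ((Fin a ⊕ Fin h) ⊕ Fin a) ((Fin a ⊕ Fin h) ⊕ Fin a) k :=
  Matrix.fromBlocks (Matrix.fromBlocks 1 (-(νᵀ * J)) 0 1)
    (Matrix.fromRows (z - (1 / 2 : k) • (νᵀ * J * ν)) ν)
    (Matrix.fromCols 0 0) 1

/-!
Parametrise `u(z,ν)` by its corner block `w = z - ½·νᵀJν` instead of by `z`. In these
coordinates the group law is `(w, ν)·(w', ν') = (w + w' - νᵀJν', ν + ν')` and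
`(w, ν)⁻¹ = (-w - νᵀJν, -ν)`, free of halves, and the commutator formula follows by
expanding the corner block.
-/

section UnipotentMat

theorem Matrix.fromRows_add_fromRows {R m₁ m₂ n : Type*} [Add R] (A C : Matrix m₁ n R)
    (B D : Matrix m₂ n R) : fromRows A B + fromRows C D = fromRows (A + C) (B + D) := by
  ext (i | i) j <;> rfl

variable {R : Type*} [CommRing R] {m n : Type*} [Fintype n] [DecidableEq m] [DecidableEq n]

/-- `[[1, -νᵀJ, w], [0, 1, ν], [0, 0, 1]]`. -/
def unipotentMat (J : Matrix n n R) (w : Matrix m m R) (ν : Matrix n m R) :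
    Matrix ((m ⊕ n) ⊕ m) ((m ⊕ n) ⊕ m) R :=
  fromBlocks (fromBlocks 1 (-(νᵀ * J)) 0 1) (fromRows w ν) (fromCols 0 0) 1

theorem unipotentMat_zero_zero (J : Matrix n n R) :
    unipotentMat J (0 : Matrix m m R) 0 = 1 := by
  simp only [unipotentMat, transpose_zero, Matrix.zero_mul, neg_zero, fromRows_zero,
    fromCols_zero, fromBlocks_one]

variable [Fintype m]

theorem unipotentMat_mul (J : Matrix n n R) (w w' : Matrix m m R) (ν ν' : Matrix n m R) :
    unipotentMat J w ν * unipotentMat J w' ν' =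
      unipotentMat J (w + w' - νᵀ * J * ν') (ν + ν') := by
  simp only [unipotentMat, fromBlocks_multiply, fromBlocks_mul_fromRows, Matrix.mul_zero,
    Matrix.zero_mul, Matrix.mul_one, Matrix.one_mul, add_zero, zero_add, Matrix.neg_mul,
    fromCols_zero, transpose_add, Matrix.add_mul, fromRows_add_fromRows]
  congr 2 <;> abel

theorem unipotentMat_inv (J : Matrix n n R) (w : Matrix m m R) (ν : Matrix n m R) :
    (unipotentMat J w ν)⁻¹ = unipotentMat J (-w - νᵀ * J * ν) (-ν) := by
  refine inv_eq_right_inv ?_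
  have corner : w + (-w - νᵀ * J * ν) - νᵀ * J * -ν = 0 := by
    rw [Matrix.mul_neg]
    abel
  rw [unipotentMat_mul, corner, add_neg_cancel, unipotentMat_zero_zero]

theorem unipotentMat_commutator (J : Matrix n n R) (w w' : Matrix m m R) (ν ν' : Matrix n m R) :
    unipotentMat J w ν * unipotentMat J w' ν' * (unipotentMat J w ν)⁻¹ *
        (unipotentMat J w' ν')⁻¹ = unipotentMat J (ν'ᵀ * J * ν - νᵀ * J * ν') 0 := by
  rw [unipotentMat_inv, unipotentMat_inv, unipotentMat_mul, unipotentMat_mul, unipotentMat_mul]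
  congr 1
  · simp only [transpose_add, transpose_neg, Matrix.add_mul, Matrix.neg_mul, Matrix.mul_neg]
    abel
  · abel

end UnipotentMat

theorem uMat_eq_unipotentMat (a h : ℕ) (J : Matrix (Fin h) (Fin h) k)
    (z : Matrix (Fin a) (Fin a) k) (ν : Matrix (Fin h) (Fin a) k) :
    uMat a h J z ν = unipotentMat J (z - (1 / 2 : k) • (νᵀ * J * ν)) ν :=
  rfl

theorem uMat_commutator_general
    (a h : ℕ)
    (J : Matrix (Fin h) (Fin h) k)
    (z z' : Matrix (Fin a) (Fin a) k) (ν ν' : Matrix (Fin h) (Fin a) k) :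
    uMat a h J z ν * uMat a h J z' ν' * (uMat a h J z ν)⁻¹ * (uMat a h J z' ν')⁻¹ =
      uMat a h J (ν'ᵀ * J * ν - νᵀ * J * ν') 0 := by
  simp only [uMat_eq_unipotentMat, unipotentMat_commutator, Matrix.mul_zero, smul_zero, sub_zero]

/-- Commutator formula:
`u(z,ν)·u(z',ν')·u(z,ν)⁻¹·u(z',ν')⁻¹ = u(ν'^T·J·ν − ν^T·J·ν', 0)`. -/
theorem uMat_commutator
    (ε : k) (hε : ε = 1 ∨ ε = -1) (a h : ℕ)
    (J : Matrix (Fin h) (Fin h) k) (hJ : IsUnit J) (hJt : Jᵀ = ε • J)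
    (z z' : Matrix (Fin a) (Fin a) k) (ν ν' : Matrix (Fin h) (Fin a) k) :
    uMat a h J z ν * uMat a h J z' ν' * (uMat a h J z ν)⁻¹ * (uMat a h J z' ν')⁻¹ =
      uMat a h J (ν'ᵀ * J * ν - νᵀ * J * ν') 0 :=
  uMat_commutator_general a h J z z' ν ν'
end

section
/- Let (M, ι̃, π̃) be a blended extension of M₂ by M₁ in 𝒞, and let F : M → M be a morphism with F ∘ ι̃ = ι̃ and π̃ ∘ F = π̃. Then there exists a unique morphism f : B → A such that F = id_M + (ι̃ ∘ j) ∘ f ∘ (ϖ ∘ π̃); moreover every such F is an isomorphism. -/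
open CategoryTheory

universe v u

/-! `F - 𝟙` is killed by `ι̃` on the left and by `π̃` on the right, so it factors uniquely as
`M → B → A → M` through the cokernel `ϖ ∘ π̃` of `ι̃` and the kernel `ι̃ ∘ j` of `π̃`. This
factorization squares to zero because `A → M → B` is zero, so `𝟙 - (F - 𝟙)` inverts `F`. -/

namespace CategoryTheory

variable {C : Type*} [Category* C] [Preadditive C]

lemma ShortComplex.Exact.existsUnique_eq_g_comp_comp_f [Balanced C] {S T : ShortComplex C}
    (hS : S.Exact) (hT : T.Exact) [Epi S.g] [Mono T.f] (φ : S.X₂ ⟶ T.X₂)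
    (hφS : S.f ≫ φ = 0) (hφT : φ ≫ T.g = 0) :
    ∃! f : S.X₃ ⟶ T.X₁, φ = S.g ≫ f ≫ T.f := by
  have hdesc : hS.desc φ hφS ≫ T.g = 0 := by
    rw [← cancel_epi S.g, hS.g_desc_assoc, hφT, Limits.comp_zero]
  refine ⟨hT.lift _ hdesc, by simp, fun f hf => ?_⟩
  rw [← cancel_mono T.f, hT.lift_f, ← cancel_epi S.g, hS.g_desc, hf]

lemma isIso_id_add_of_comp_self_eq_zero {X : C} (n : X ⟶ X) (hn : n ≫ n = 0) :
    IsIso (𝟙 X + n) :=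
  ⟨𝟙 X - n, by simp [hn], by simp [hn]⟩

end CategoryTheory

theorem blendedExtension_endo_eq_id_add_and_isIso_general
    {𝒞 : Type u} [Category.{v} 𝒞] [Abelian 𝒞]
    {A B M₁ M₂ M : 𝒞}
    (j : A ⟶ M₁) (ϖ : M₂ ⟶ B)
    (ι' : M₁ ⟶ M) (π' : M ⟶ M₂)
    (w₃ : ι' ≫ (π' ≫ ϖ) = 0) (h₃ : (ShortComplex.mk ι' (π' ≫ ϖ) w₃).ShortExact)
    (w₄ : (j ≫ ι') ≫ π' = 0) (h₄ : (ShortComplex.mk (j ≫ ι') π' w₄).ShortExact)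
    (F : M ⟶ M) (hF₁ : ι' ≫ F = ι') (hF₂ : F ≫ π' = π') :
    (∃! f : B ⟶ A, F = 𝟙 M + π' ≫ ϖ ≫ f ≫ j ≫ ι') ∧ IsIso F := by
  have := h₃.epi_g
  have := h₄.mono_f
  obtain ⟨f, hf, hf_unique⟩ := h₃.exact.existsUnique_eq_g_comp_comp_f h₄.exact (F - 𝟙 M)
    (by simp [Preadditive.comp_sub, hF₁]) (by simp [Preadditive.sub_comp, hF₂])
  simp only [Category.assoc, sub_eq_iff_eq_add'] at hf hf_unique
  refine ⟨⟨f, hf, hf_unique⟩, ?_⟩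
  rw [hf]
  apply isIso_id_add_of_comp_self_eq_zero
  simp [reassoc_of% w₃]

/-- An endomorphism `F` of a blended extension `M` of `M₂` by `M₁` which induces the identity
on `M₁` and on `M₂` is of the form `id_M + ι̃ ∘ j ∘ f ∘ ϖ ∘ π̃` for a unique `f : B ⟶ A`;
moreover every such `F` is an isomorphism. -/
theorem blendedExtension_endo_eq_id_add_and_isIso
    {𝒞 : Type u} [Category.{v} 𝒞] [Abelian 𝒞]
    {A B N M₁ M₂ M : 𝒞}
    (j : A ⟶ M₁) (π : M₁ ⟶ N) (ι : N ⟶ M₂) (ϖ : M₂ ⟶ B)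
    (w₁ : j ≫ π = 0) (h₁ : (ShortComplex.mk j π w₁).ShortExact)
    (w₂ : ι ≫ ϖ = 0) (h₂ : (ShortComplex.mk ι ϖ w₂).ShortExact)
    (ι' : M₁ ⟶ M) (π' : M ⟶ M₂)
    (hcomm : ι' ≫ π' = π ≫ ι)
    (w₃ : ι' ≫ (π' ≫ ϖ) = 0) (h₃ : (ShortComplex.mk ι' (π' ≫ ϖ) w₃).ShortExact)
    (w₄ : (j ≫ ι') ≫ π' = 0) (h₄ : (ShortComplex.mk (j ≫ ι') π' w₄).ShortExact)
    (F : M ⟶ M) (hF₁ : ι' ≫ F = ι') (hF₂ : F ≫ π' = π') :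
    (∃! f : B ⟶ A, F = 𝟙 M + π' ≫ ϖ ≫ f ≫ j ≫ ι') ∧ IsIso F :=
  blendedExtension_endo_eq_id_add_and_isIso_general j ϖ ι' π' w₃ h₃ w₄ h₄ F hF₁ hF₂
end
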